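/- Let t = (t_1,t_2,t_3,t_4) ∈ ℝ⁴ with t_1 ≠ 0. Define G : ℝ⁴ → ℝ by G(r_1,r_2,θ_1,θ_2) = Γ_t(r_1,r_2) + t_1·cos θ_2 · Ω̄(r_1,r_2) and K : ℝ⁴ → ℝ by K(r_1,r_2,θ_1,θ_2) = r_1²/2. Let p = (r_1,r_2,θ_1,θ_2) with r_2 > 0, 8−r_2² > 0, 2+2r_1²−r_2² > 0, 6−2r_1²+r_2² > 0, 4+r_1²−r_2² > 0 and 2−r_1²+r_2² > 0. If there exists s ∈ ℝ such that the Fréchet derivative of G at p equals s times the Fréchet derivative of K at p, then sin θ_2 = 0. -/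

import Mathlib

open Real

/-- `Γ_t(r_1,r_2)`. -/
noncomputable def Γt (t : Fin 4 → ℝ) (r₁ r₂ : ℝ) : ℝ :=
  (1 - 2 * t 0) * (2 - r₁ ^ 2 + r₂ ^ 2) / 2 +
  (t 1 / 50) * (6 - r₁ ^ 2) ^ 2 * (6 - 2 * r₁ ^ 2 + r₂ ^ 2) ^ 2 +
  (t 2 / 50) * (6 - 2 * r₁ ^ 2 + r₂ ^ 2) ^ 2 * (4 + r₁ ^ 2 - r₂ ^ 2) ^ 2 +
  (t 3 / 100) * (6 - r₁ ^ 2) ^ 2 * (4 + r₁ ^ 2 - r₂ ^ 2) ^ 2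

/-- `Ω̄(r_1,r_2)`. -/
noncomputable def Ωbar (r₁ r₂ : ℝ) : ℝ :=
  (r₂ / 50) * Real.sqrt ((8 - r₂ ^ 2) * (2 + 2 * r₁ ^ 2 - r₂ ^ 2) *
    (6 - 2 * r₁ ^ 2 + r₂ ^ 2) * (4 + r₁ ^ 2 - r₂ ^ 2) * (2 - r₁ ^ 2 + r₂ ^ 2))

/-- `G(r_1,r_2,θ_1,θ_2) = Γ_t(r_1,r_2) + t_1 cos θ_2 · Ω̄(r_1,r_2)`, i.e. `H_t ∘ φ_1`
in polar coordinates; the coordinates are `p 0 = r_1`, `p 1 = r_2`, `p 2 = θ_1`,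
`p 3 = θ_2`. -/
noncomputable def Gfun (t : Fin 4 → ℝ) (p : Fin 4 → ℝ) : ℝ :=
  Γt t (p 0) (p 1) + t 0 * Real.cos (p 3) * Ωbar (p 0) (p 1)

/-- `K(r_1,r_2,θ_1,θ_2) = r_1²/2`, i.e. `J ∘ φ_1` in polar coordinates. -/
noncomputable def Kfun (p : Fin 4 → ℝ) : ℝ := (p 0) ^ 2 / 2

/-! Both `G` and `K` depend on `θ_2` only through the explicit factor `cos θ_2`, so the
derivative along `∂/∂θ_2` kills `dK` and turns `dG` into `-t_1 sin θ_2 · Ω̄`. On the chart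
domain `Ω̄ > 0`, hence `dG = s • dK` forces `sin θ_2 = 0`. -/

theorem HasFDerivAt.hasDerivAt_comp_update {ι F : Type*} [Fintype ι] [DecidableEq ι]
    [NormedAddCommGroup F] [NormedSpace ℝ F] {f : (ι → ℝ) → F} {f' : (ι → ℝ) →L[ℝ] F}
    {x : ι → ℝ} (hf : HasFDerivAt f f' x) (i : ι) :
    HasDerivAt (fun y => f (Function.update x i y)) (f' (Pi.single i 1)) (x i) := by
  rw [← Function.update_eq_self i x] at hf
  exact hf.comp_hasDerivAt (x i) (hasDerivAt_update x i (x i))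

noncomputable def Ωradicand (r₁ r₂ : ℝ) : ℝ :=
  (8 - r₂ ^ 2) * (2 + 2 * r₁ ^ 2 - r₂ ^ 2) *
    (6 - 2 * r₁ ^ 2 + r₂ ^ 2) * (4 + r₁ ^ 2 - r₂ ^ 2) * (2 - r₁ ^ 2 + r₂ ^ 2)

theorem Ωbar_eq (r₁ r₂ : ℝ) : Ωbar r₁ r₂ = r₂ / 50 * √(Ωradicand r₁ r₂) := rfl

theorem Ωbar_pos {r₁ r₂ : ℝ} (hr₂ : 0 < r₂) (hR : 0 < Ωradicand r₁ r₂) :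
    0 < Ωbar r₁ r₂ :=
  mul_pos (by positivity) (sqrt_pos.2 hR)

theorem differentiableAt_Gfun (t : Fin 4 → ℝ) {p : Fin 4 → ℝ}
    (hR : Ωradicand (p 0) (p 1) ≠ 0) : DifferentiableAt ℝ (Gfun t) p := by
  have hsqrt : DifferentiableAt ℝ (fun q : Fin 4 → ℝ => √(Ωradicand (q 0) (q 1))) p :=
    DifferentiableAt.sqrt (by unfold Ωradicand; fun_prop) hR
  unfold Gfun Γt
  simp only [Ωbar_eq]
  fun_prop

theorem Gfun_update_three (t p : Fin 4 → ℝ) (y : ℝ) :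
    Gfun t (Function.update p 3 y) = Γt t (p 0) (p 1) + t 0 * cos y * Ωbar (p 0) (p 1) := by
  simp [Gfun]

theorem Kfun_update_three (p : Fin 4 → ℝ) (y : ℝ) : Kfun (Function.update p 3 y) = Kfun p := by
  simp [Kfun]

theorem fderiv_Gfun_single_three (t : Fin 4 → ℝ) {p : Fin 4 → ℝ}
    (hR : Ωradicand (p 0) (p 1) ≠ 0) :
    fderiv ℝ (Gfun t) p (Pi.single 3 1) = -(t 0 * sin (p 3) * Ωbar (p 0) (p 1)) := by
  have hθ : HasDerivAt (fun y => Gfun t (Function.update p 3 y))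
      (t 0 * -sin (p 3) * Ωbar (p 0) (p 1)) (p 3) := by
    simp only [Gfun_update_three]
    exact (((hasDerivAt_cos (p 3)).const_mul (t 0)).mul_const _).const_add _
  rw [((differentiableAt_Gfun t hR).hasFDerivAt.hasDerivAt_comp_update 3).unique hθ]
  ring

theorem fderiv_Kfun_single_three (p : Fin 4 → ℝ) : fderiv ℝ Kfun p (Pi.single 3 1) = 0 := by
  have hK : DifferentiableAt ℝ Kfun p := by unfold Kfun; fun_prop
  refine (hK.hasFDerivAt.hasDerivAt_comp_update 3).unique ?_
  simpa only [Kfun_update_three] using hasDerivAt_const (p 3) (Kfun p)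

/-- At a point of the chart domain (with `r_2 > 0` and all relevant radicand factors
positive), if `dG_p = s · dK_p` for some `s ∈ ℝ`, then `sin θ_2 = 0`: every rank-one
singular point of `(J,H_t)` in the chart `φ_1` with `dJ ≠ 0` and `t_1 ≠ 0` has
`v = r_2 sin θ_2 = 0`. -/
theorem rank_one_singular_implies_sin_theta2_zero
    (t : Fin 4 → ℝ) (ht : t 0 ≠ 0) (p : Fin 4 → ℝ)
    (hr2 : 0 < p 1)
    (h3 : 0 < 8 - (p 1) ^ 2)
    (h5 : 0 < 2 + 2 * (p 0) ^ 2 - (p 1) ^ 2)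
    (h2 : 0 < 6 - 2 * (p 0) ^ 2 + (p 1) ^ 2)
    (h4 : 0 < 4 + (p 0) ^ 2 - (p 1) ^ 2)
    (h1 : 0 < 2 - (p 0) ^ 2 + (p 1) ^ 2)
    (s : ℝ)
    (hs : fderiv ℝ (Gfun t) p = s • fderiv ℝ Kfun p) :
    Real.sin (p 3) = 0 := by
  have hR : 0 < Ωradicand (p 0) (p 1) :=
    mul_pos (mul_pos (mul_pos (mul_pos h3 h5) h2) h4) h1
  have hθ := DFunLike.congr_fun hs (Pi.single 3 1)
  rw [smul_apply, fderiv_Gfun_single_three t hR.ne',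
    fderiv_Kfun_single_three, smul_zero, neg_eq_zero] at hθ
  rcases mul_eq_zero.1 hθ with hθ | hΩ
  · exact (mul_eq_zero.1 hθ).resolve_left ht
  · exact absurd hΩ (Ωbar_pos hr2 hR).ne'
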